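/- arXiv:1603.07379 — 2 statements merged into one kernel-verified Lean document; each statement's English description precedes it below -/
import Mathlib

section
/- Let L and R be the left and right eigenvector matrices of A₁ = [[0,-1,0],[-1/v̄,0,1/v̄],[0,1,0]] (with λ₃ = √(2/v̄)), and let A₂ = diag(0, μ̃/v̄, κ/v̄) with μ̃, κ, v̄ > 0. Then the matrix A₄ := L A₂ R is symmetric and positive semidefinite. -/
/-!
The rows of `R` are rescaled columns of `L`: `R = diag(1, λ₃²/2, 1) Lᵀ`. Hence
`L A₂ R = L diag(0, μ̃ λ₃² / (2 v̄), κ / v̄) Lᵀ` is congruent to a nonnegative diagonal matrix.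
-/

open Matrix

theorem Matrix.posSemidef_mul_diagonal_mul_transpose {m n : Type*} [Finite m] [Fintype n]
    [DecidableEq n] (L : Matrix m n ℝ) {d : n → ℝ} (hd : 0 ≤ d) :
    (L * diagonal d * Lᵀ).PosSemidef := by
  simpa only [conjTranspose_eq_transpose_of_trivial] using
    (PosSemidef.diagonal hd).mul_mul_conjTranspose_same L

theorem eigenvectors_right_eq_diagonal_mul_transpose_left (lam s : ℝ) (hlam : lam ≠ 0) :
    !![-(1 / 2), s, -(1 / 2); -(lam / 2), 0, lam / 2; 1 / 2, s, 1 / 2] =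
      diagonal ![1, lam ^ 2 / 2, 1] *
        (!![-(1 / 2), -(1 / lam), 1 / 2; s, 0, s; -(1 / 2), 1 / lam, 1 / 2])ᵀ := by
  ext i j
  fin_cases i <;> fin_cases j <;> simp <;> field_simp

/-- With `L, R` the left/right eigenvector matrices of
`A₁ = [[0,-1,0],[-1/v̄,0,1/v̄],[0,1,0]]` (with `λ₃ = √(2/v̄)`), and
`A₂ = diag(0, μ̃/v̄, κ/v̄)` with `μ̃, κ, v̄ > 0`, the matrix `A₄ = L A₂ R` is symmetric and
positive semidefinite. -/
theorem stmt6 (v μ κ : ℝ) (hv : 0 < v) (hμ : 0 < μ) (hκ : 0 < κ) :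
    let lam : ℝ := Real.sqrt (2 / v)
    let L : Matrix (Fin 3) (Fin 3) ℝ :=
      !![-(1 / 2), -(1 / lam), 1 / 2;
         Real.sqrt (1 / 2), 0, Real.sqrt (1 / 2);
         -(1 / 2), 1 / lam, 1 / 2]
    let R : Matrix (Fin 3) (Fin 3) ℝ :=
      !![-(1 / 2), Real.sqrt (1 / 2), -(1 / 2);
         -(lam / 2), 0, lam / 2;
         1 / 2, Real.sqrt (1 / 2), 1 / 2]
    let A₂ : Matrix (Fin 3) (Fin 3) ℝ := Matrix.diagonal ![0, μ / v, κ / v]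
    (L * A₂ * R).IsSymm ∧ (L * A₂ * R).PosSemidef := by
  intro lam L R A₂
  have hlam : lam ≠ 0 := (Real.sqrt_pos.mpr (by positivity)).ne'
  have hR : R = diagonal ![1, lam ^ 2 / 2, 1] * Lᵀ :=
    eigenvectors_right_eq_diagonal_mul_transpose_left lam _ hlam
  have hA₄ : L * A₂ * R = L * diagonal ![0, μ / v * (lam ^ 2 / 2), κ / v] * Lᵀ := by
    rw [hR, ← Matrix.mul_assoc, Matrix.mul_assoc L, diagonal_mul_diagonal]
    congr
    ext i
    fin_cases i <;> simp
  have hpsd : (L * A₂ * R).PosSemidef := by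
    rw [hA₄]
    refine posSemidef_mul_diagonal_mul_transpose L fun i => ?_
    fin_cases i <;> simp <;> positivity
  exact ⟨isHermitian_iff_isSymm.mp hpsd.isHermitian, hpsd⟩
end

section
/- Let a, h : ℝ → ℝ be positive bounded continuous functions, a₊, h₊ > 0 constants, and suppose |a(x) - a₊| ≤ C_a r(x) and |h(x) - h₊| ≤ C_h r(x) for x ≥ 1, where r ∈ L¹([1, ∞)) is nonnegative. If (v, w) : [1, ∞) → ℝ² solves v' = h w, w' = -a v with v(x), w(x) → 0 as x → +∞, then (v, w) ≡ 0 on [1, ∞). -/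
open MeasureTheory Filter Set Topology

/-!
The energy `E = a₊ v² + h₊ w²` satisfies `E' = 2 (a₊ h - h₊ a) v w`, and by AM-GM
`2 √(a₊ h₊) |v w| ≤ E`, so `E' ≥ -φ E` with `φ = |a₊ h - h₊ a| / √(a₊ h₊)` integrable on `[1, ∞)`.
Hence `E · exp (∫₁ˣ φ)` is nondecreasing; it tends to `0` at `+∞` and is nonnegative, so it vanishes.
-/

theorem nonpos_of_neg_mul_le_deriv_of_tendsto_zero {F F' φ : ℝ → ℝ} {x₀ : ℝ}
    (hφ : Continuous φ) (hφi : IntegrableOn φ (Ioi x₀))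
    (hF : ∀ x ≥ x₀, HasDerivAt F (F' x) x) (hF' : ∀ x ≥ x₀, -(φ x * F x) ≤ F' x)
    (hlim : Tendsto F atTop (𝓝 0)) : ∀ x ≥ x₀, F x ≤ 0 := by
  set R : ℝ → ℝ := fun x => ∫ t in x₀..x, φ t
  set G : ℝ → ℝ := fun x => F x * Real.exp (R x)
  have hG : ∀ x ≥ x₀, HasDerivAt G ((F' x + φ x * F x) * Real.exp (R x)) x := fun x hx =>
    ((hF x hx).mul (hφ.integral_hasStrictDerivAt x₀ x).hasDerivAt.exp).congr_deriv (by ring)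
  have hGmono : MonotoneOn G (Ici x₀) := by
    refine monotoneOn_of_hasDerivWithinAt_nonneg (convex_Ici x₀)
      (f' := fun x => (F' x + φ x * F x) * Real.exp (R x))
      (fun x hx => (hG x hx).continuousAt.continuousWithinAt) (fun x hx => ?_) (fun x hx => ?_)
    · rw [interior_Ici] at hx
      exact (hG x hx.le).hasDerivWithinAt
    · rw [interior_Ici] at hx
      have hFx := hF' x hx.le
      exact mul_nonneg (by linarith) (Real.exp_pos _).le
  have hGlim : Tendsto G atTop (𝓝 0) := by
    have hR := (Real.continuous_exp.tendsto _).comp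
      (intervalIntegral_tendsto_integral_Ioi x₀ hφi tendsto_id)
    have hG0 := hlim.mul hR
    rwa [zero_mul] at hG0
  intro x hx
  have hGx : G x ≤ 0 := ge_of_tendsto hGlim <| by
    filter_upwards [eventually_ge_atTop x] with y hy
    exact hGmono hx (hx.trans hy) hy
  exact nonpos_of_mul_nonpos_left hGx (Real.exp_pos _)

theorem hasDerivAt_energy {a h v w : ℝ → ℝ} {ap hp x : ℝ}
    (hv : HasDerivAt v (h x * w x) x) (hw : HasDerivAt w (-(a x * v x)) x) :
    HasDerivAt (fun y => ap * v y ^ 2 + hp * w y ^ 2)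
      (2 * (ap * h x - hp * a x) * v x * w x) x :=
  (((hv.pow 2).const_mul ap).add ((hw.pow 2).const_mul hp)).congr_deriv (by ring)

theorem two_sqrt_mul_mul_abs_mul_le {α β v w : ℝ} (hα : 0 ≤ α) (hβ : 0 ≤ β) :
    2 * √(α * β) * |v * w| ≤ α * v ^ 2 + β * w ^ 2 := by
  calc 2 * √(α * β) * |v * w| = 2 * (√α * |v|) * (√β * |w|) := by
        rw [Real.sqrt_mul hα, abs_mul]; ring
    _ ≤ (√α * |v|) ^ 2 + (√β * |w|) ^ 2 := two_mul_le_add_sq _ _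
    _ = α * v ^ 2 + β * w ^ 2 := by
        rw [mul_pow, mul_pow, sq_abs, sq_abs, Real.sq_sqrt hα, Real.sq_sqrt hβ]

theorem neg_abs_div_mul_energy_le {α β ρ v w : ℝ} (hα : 0 < α) (hβ : 0 < β) :
    -(|ρ| / √(α * β) * (α * v ^ 2 + β * w ^ 2)) ≤ 2 * ρ * v * w := by
  have hs : 0 < √(α * β) := Real.sqrt_pos.mpr (mul_pos hα hβ)
  have hE := two_sqrt_mul_mul_abs_mul_le (v := v) (w := w) hα.le hβ.le
  have : |2 * ρ * v * w| ≤ |ρ| / √(α * β) * (α * v ^ 2 + β * w ^ 2) := by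
    calc |2 * ρ * v * w| = |ρ| / √(α * β) * (2 * √(α * β) * |v * w|) := by
          field_simp; simp only [abs_mul, abs_two]; ring
      _ ≤ _ := by gcongr
  linarith [neg_abs_le (2 * ρ * v * w)]

theorem integrableOn_abs_mul_sub_mul {a h r : ℝ → ℝ} {ap hp Ca Ch x₀ : ℝ}
    (hap : 0 ≤ ap) (hhp : 0 ≤ hp) (ha : Continuous a) (hh : Continuous h)
    (hr : IntegrableOn r (Ici x₀)) (hadec : ∀ x ≥ x₀, |a x - ap| ≤ Ca * r x)
    (hhdec : ∀ x ≥ x₀, |h x - hp| ≤ Ch * r x) :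
    IntegrableOn (fun x => |ap * h x - hp * a x|) (Ici x₀) := by
  refine (hr.const_mul (ap * Ch + hp * Ca)).mono' (by fun_prop) ?_
  filter_upwards [ae_restrict_mem measurableSet_Ici] with x hx
  calc ‖|ap * h x - hp * a x|‖ = |ap * (h x - hp) - hp * (a x - ap)| := by
        rw [Real.norm_eq_abs, abs_abs]; ring_nf
    _ ≤ ap * |h x - hp| + hp * |a x - ap| := by
        grw [abs_sub, abs_mul, abs_mul, abs_of_nonneg hap, abs_of_nonneg hhp]
    _ ≤ ap * (Ch * r x) + hp * (Ca * r x) := by grw [hadec x hx, hhdec x hx]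
    _ = (ap * Ch + hp * Ca) * r x := by ring

theorem stmt16_general (a h r : ℝ → ℝ) (ap hp Ca Ch : ℝ)
    (hacont : Continuous a) (hhcont : Continuous h)
    (hap : 0 < ap) (hhp : 0 < hp)
    (hrint : IntegrableOn r (Set.Ici (1 : ℝ)) volume)
    (hadec : ∀ x ≥ (1 : ℝ), |a x - ap| ≤ Ca * r x)
    (hhdec : ∀ x ≥ (1 : ℝ), |h x - hp| ≤ Ch * r x)
    (v w : ℝ → ℝ)
    (hv : ∀ x ≥ (1 : ℝ), HasDerivAt v (h x * w x) x)
    (hw : ∀ x ≥ (1 : ℝ), HasDerivAt w (-(a x * v x)) x)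
    (hv0 : Tendsto v atTop (nhds 0)) (hw0 : Tendsto w atTop (nhds 0)) :
    ∀ x ≥ (1 : ℝ), v x = 0 ∧ w x = 0 := by
  have hφi : IntegrableOn (fun x => |ap * h x - hp * a x| / √(ap * hp)) (Ioi 1) :=
    IntegrableOn.mono_set
      ((integrableOn_abs_mul_sub_mul hap.le hhp.le hacont hhcont hrint hadec hhdec).div_const _)
      Ioi_subset_Ici_self
  have hE0 : Tendsto (fun x => ap * v x ^ 2 + hp * w x ^ 2) atTop (𝓝 0) := by
    simpa using ((hv0.pow 2).const_mul ap).add ((hw0.pow 2).const_mul hp)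
  have hE := nonpos_of_neg_mul_le_deriv_of_tendsto_zero (by fun_prop) hφi
    (fun x hx => hasDerivAt_energy (hv x hx) (hw x hx))
    (fun x _ => neg_abs_div_mul_energy_le hap hhp) hE0
  intro x hx
  have hvx : v x ^ 2 = 0 := by nlinarith [hE x hx, sq_nonneg (v x), sq_nonneg (w x)]
  have hwx : w x ^ 2 = 0 := by nlinarith [hE x hx, sq_nonneg (v x), sq_nonneg (w x)]
  exact ⟨pow_eq_zero_iff two_ne_zero |>.mp hvx, pow_eq_zero_iff two_ne_zero |>.mp hwx⟩

/-- Let `a, h` be positive bounded continuous functions converging to `a₊, h₊ > 0` at `+∞`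
at an integrable rate `r`. If `(v, w)` solves `v' = h w`, `w' = -a v` on `[1,∞)` with
`v, w → 0` at `+∞`, then `(v, w) ≡ 0` on `[1,∞)`. -/
theorem stmt16 (a h r : ℝ → ℝ) (ap hp Ca Ch : ℝ)
    (hacont : Continuous a) (hhcont : Continuous h)
    (hapos : ∀ x, 0 < a x) (hhpos : ∀ x, 0 < h x)
    (habdd : ∃ Ma, ∀ x, a x ≤ Ma) (hhbdd : ∃ Mh, ∀ x, h x ≤ Mh)
    (hap : 0 < ap) (hhp : 0 < hp)
    (hrnn : ∀ x, 0 ≤ r x)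
    (hrint : IntegrableOn r (Set.Ici (1 : ℝ)) volume)
    (hadec : ∀ x ≥ (1 : ℝ), |a x - ap| ≤ Ca * r x)
    (hhdec : ∀ x ≥ (1 : ℝ), |h x - hp| ≤ Ch * r x)
    (v w : ℝ → ℝ)
    (hv : ∀ x ≥ (1 : ℝ), HasDerivAt v (h x * w x) x)
    (hw : ∀ x ≥ (1 : ℝ), HasDerivAt w (-(a x * v x)) x)
    (hv0 : Tendsto v atTop (nhds 0)) (hw0 : Tendsto w atTop (nhds 0)) :
    ∀ x ≥ (1 : ℝ), v x = 0 ∧ w x = 0 :=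
  stmt16_general a h r ap hp Ca Ch hacont hhcont hap hhp hrint hadec hhdec v w hv hw hv0 hw0
end
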